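/- Let T_k denote the convex hull of k independent uniform random points in the triangle T with vertices (0,0), (0,1), (1,0), together with the two points (0,1) and (1,0), and let f₀(T_k) be its number of vertices. Using Buchta's formulas E f₀(T_k) = (2/3)H_k + 7/3 and Var f₀(T_k) = (10/27)H_k + (4/9)H_k^{(2)} − 28/27 + 4/(9(k+1)), if χ is a homogeneous Poisson point process on T with E(#χ) = M > 1 and T_χ = [χ, (0,1), (1,0)], then E f₀(T_χ) = (2/3) log M + (2γ+7)/3 + O(M^{−1/2}) as M → ∞. -/

import Mathlib

/-- The `n`-th harmonic number `H_n = ∑_{i=1}^n 1/i` (with `H_0 = 0`). -/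
noncomputable def harmonicR (n : ℕ) : ℝ := ∑ i ∈ Finset.range n, (1 : ℝ) / (i + 1)

/-!
It suffices to show `E H_Y = log M + γ + O(M^{-1/2})` for `Y ~ Poisson(M)`. Pointwise,
`H_k - log (k + 1) - γ = O(1/(k + 1))`, since it is squeezed between the two Euler–Mascheroni
sequences, and `log x ≤ x - 1` gives
`|log (k + 1) - log M| ≤ |k + 1 - M| / M + (k + 1 - M)² / ((k + 1) M)`.
Averaged over `Y`, these are controlled by `E (Y + 1 - M)² = M + 1`, `E [1/(Y + 1)] ≤ 1/M` and
`E [(Y + 1 - M)² / (Y + 1)] ≤ 1`, the last two by the shift identity `p_{k+1} (k + 1) = M p_k` of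
the Poisson weights; AM–GM bounds the first absolute moment by the second.
-/

open Real
open scoped Nat

lemma harmonicR_eq_harmonic (n : ℕ) : harmonicR n = harmonic n := by
  simp [harmonicR, harmonic, one_div]

lemma eulerMascheroniSeq'_sub_eulerMascheroniSeq_le (k : ℕ) :
    eulerMascheroniSeq' k - eulerMascheroniSeq k ≤ 2 / (k + 1) := by
  rcases Nat.eq_zero_or_pos k with rfl | hk
  · simp [eulerMascheroniSeq', eulerMascheroniSeq_zero]
  have hk1 : (1 : ℝ) ≤ k := by exact_mod_cast hk
  rw [eulerMascheroniSeq', if_neg hk.ne', eulerMascheroniSeq, sub_sub_sub_cancel_left,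
    ← log_div (by positivity) (by positivity)]
  calc log ((k + 1) / k) ≤ (k + 1) / k - 1 := log_le_sub_one_of_pos (by positivity)
    _ = 1 / k := by field_simp; ring
    _ ≤ 2 / (k + 1) := by rw [div_le_div_iff₀ (by positivity) (by positivity)]; linarith

lemma abs_harmonicR_sub_log_sub_eulerMascheroniConstant_le (k : ℕ) :
    |harmonicR k - log (k + 1) - eulerMascheroniConstant| ≤ 2 / (k + 1) := by
  have lower := eulerMascheroniSeq_lt_eulerMascheroniConstant k
  have upper := eulerMascheroniConstant_lt_eulerMascheroniSeq' k
  have gap := eulerMascheroniSeq'_sub_eulerMascheroniSeq_le k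
  rw [eulerMascheroniSeq, ← harmonicR_eq_harmonic] at lower
  rw [eulerMascheroniSeq, ← harmonicR_eq_harmonic] at gap
  rw [abs_le]
  constructor <;> linarith

lemma abs_log_sub_log_le {a M : ℝ} (ha : 0 < a) (hM : 0 < M) :
    |log a - log M| ≤ |a - M| / M + (a - M) ^ 2 / a / M := by
  have hquad : 0 ≤ (a - M) ^ 2 / a / M := by positivity
  rcases le_total M a with h | h
  · have hlog : log a - log M ≤ (a - M) / M := by
      rw [← log_div ha.ne' hM.ne']
      calc log (a / M) ≤ a / M - 1 := log_le_sub_one_of_pos (by positivity)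
        _ = (a - M) / M := by field_simp
    rw [abs_of_nonneg (sub_nonneg.mpr (log_le_log hM h)), abs_of_nonneg (sub_nonneg.mpr h)]
    linarith
  · have hlog : log M - log a ≤ (M - a) / M + (a - M) ^ 2 / a / M := by
      rw [← log_div hM.ne' ha.ne']
      calc log (M / a) ≤ M / a - 1 := log_le_sub_one_of_pos (by positivity)
        _ = (M - a) / M + (a - M) ^ 2 / a / M := by field_simp; ring
    rw [abs_of_nonpos (sub_nonpos.mpr (log_le_log ha h)), abs_of_nonpos (sub_nonpos.mpr h),
      neg_sub, neg_sub]
    linarith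

lemma abs_le_sq_add_div_two_sqrt (x : ℝ) {M : ℝ} (hM : 0 < M) :
    |x| ≤ (x ^ 2 + M) / (2 * √M) := by
  have hs : 0 < √M := sqrt_pos.mpr hM
  rw [le_div_iff₀ (by positivity), ← sq_abs x]
  nlinarith [two_mul_le_add_sq |x| √M, sq_sqrt hM.le]

noncomputable def harmonicGapBound (M : ℝ) (k : ℕ) : ℝ :=
  2 / (k + 1) + ((k + 1 - M) ^ 2 + M) / (2 * √M) / M + (k + 1 - M) ^ 2 / (k + 1) / M

lemma abs_harmonicR_sub_log_add_eulerMascheroniConstant_le {M : ℝ} (hM : 0 < M) (k : ℕ) :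
    |harmonicR k - (log M + eulerMascheroniConstant)| ≤ harmonicGapBound M k := by
  have hH := abs_harmonicR_sub_log_sub_eulerMascheroniConstant_le k
  have hlog := abs_log_sub_log_le (a := k + 1) (by positivity) hM
  have hAMGM := div_le_div_of_nonneg_right (abs_le_sq_add_div_two_sqrt (k + 1 - M) hM) hM.le
  calc |harmonicR k - (log M + eulerMascheroniConstant)|
      = |(harmonicR k - log (k + 1) - eulerMascheroniConstant) + (log (k + 1) - log M)| := by
        ring_nf
    _ ≤ |harmonicR k - log (k + 1) - eulerMascheroniConstant| + |log (k + 1) - log M| :=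
        abs_add_le _ _
    _ ≤ harmonicGapBound M k := by
        rw [harmonicGapBound]
        linarith

lemma abs_tsum_mul_sub_le {ι : Type*} {w f g : ι → ℝ} {c B : ℝ} (hw : HasSum w 1)
    (hw₀ : ∀ i, 0 ≤ w i) (hg : HasSum (fun i => w i * g i) B)
    (hfg : ∀ i, |f i - c| ≤ g i) :
    |∑' i, w i * f i - c| ≤ B := by
  have hdom : ∀ i, ‖w i * (f i - c)‖ ≤ w i * g i := fun i => by
    rw [norm_mul, norm_of_nonneg (hw₀ i)]
    exact mul_le_mul_of_nonneg_left (hfg i) (hw₀ i)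
  have hcentered : ∑' i, w i * f i - c = ∑' i, w i * (f i - c) := by
    have hsum := (Summable.of_norm_bounded hg.summable hdom).hasSum.add (hw.mul_left c)
    rw [mul_one] at hsum
    rw [(hsum.congr_fun fun i => by ring).tsum_eq]
    ring
  rw [hcentered]
  exact tsum_of_norm_bounded hg hdom

-- Written as in the statement, so that its series is literally `∑' k, poissonWeight M k * _`.
noncomputable def poissonWeight (M : ℝ) (k : ℕ) : ℝ := M ^ k * exp (-M) / k !

section PoissonWeight

variable {M : ℝ}

lemma poissonWeight_nonneg (hM : 0 ≤ M) (k : ℕ) : 0 ≤ poissonWeight M k := by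
  unfold poissonWeight
  positivity

lemma poissonWeight_zero : poissonWeight M 0 = exp (-M) := by
  simp [poissonWeight]

lemma poissonWeight_succ_mul (k : ℕ) :
    poissonWeight M (k + 1) * (k + 1) = M * poissonWeight M k := by
  simp only [poissonWeight, Nat.factorial_succ, Nat.cast_mul, Nat.cast_succ, pow_succ]
  field_simp

lemma hasSum_poissonWeight (M : ℝ) : HasSum (poissonWeight M) 1 := by
  have h := (NormedSpace.expSeries_div_hasSum_exp M).mul_left (exp (-M))
  rw [← exp_eq_exp_ℝ, ← exp_add, neg_add_cancel, exp_zero] at h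
  exact h.congr_fun fun k => by rw [poissonWeight]; ring

lemma hasSum_poissonWeight_mul_natCast (M : ℝ) : HasSum (fun k => poissonWeight M k * k) M := by
  rw [← hasSum_nat_add_iff' 1]
  simp only [Finset.sum_range_one, Nat.cast_zero, mul_zero, sub_zero, Nat.cast_succ]
  simpa only [poissonWeight_succ_mul, mul_one] using (hasSum_poissonWeight M).mul_left M

lemma hasSum_poissonWeight_mul_natCast_mul_natCast_sub_one (M : ℝ) :
    HasSum (fun k => poissonWeight M k * (k * (k - 1))) (M ^ 2) := by
  rw [← hasSum_nat_add_iff' 2]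
  simp only [Finset.sum_range_succ, Finset.sum_range_zero, Nat.cast_zero, Nat.cast_one, zero_mul,
    mul_zero, sub_self, add_zero, sub_zero]
  have h := (hasSum_poissonWeight M).mul_left (M ^ 2)
  rw [mul_one] at h
  refine h.congr_fun fun n => ?_
  have h₁ := poissonWeight_succ_mul (M := M) (n + 1)
  have h₀ := poissonWeight_succ_mul (M := M) n
  push_cast at h₁ ⊢
  linear_combination ((n : ℝ) + 1) * h₁ + M * h₀

lemma hasSum_poissonWeight_mul_sub_sq (M a : ℝ) :
    HasSum (fun k => poissonWeight M k * (k - a) ^ 2) (M + (M - a) ^ 2) := by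
  have h := ((hasSum_poissonWeight_mul_natCast_mul_natCast_sub_one M).add
    ((hasSum_poissonWeight_mul_natCast M).mul_left (1 - 2 * a))).add
    ((hasSum_poissonWeight M).mul_left (a ^ 2))
  rw [show M ^ 2 + (1 - 2 * a) * M + a ^ 2 * 1 = M + (M - a) ^ 2 by ring] at h
  exact h.congr_fun fun k => by ring

lemma hasSum_poissonWeight_mul_div_succ (hM : M ≠ 0) {f : ℕ → ℝ} {a : ℝ}
    (hf : HasSum (fun k => poissonWeight M k * f k) a) :
    HasSum (fun k => poissonWeight M k * (f (k + 1) / (k + 1))) ((a - exp (-M) * f 0) / M) := by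
  rw [← hasSum_nat_add_iff' 1, Finset.sum_range_one, poissonWeight_zero] at hf
  refine (hf.div_const M).congr_fun fun k => ?_
  have h := poissonWeight_succ_mul (M := M) k
  field_simp
  linear_combination -f (k + 1) * h

end PoissonWeight

lemma hasSum_poissonWeight_mul_harmonicGapBound {M : ℝ} (hM : 0 < M) :
    HasSum (fun k => poissonWeight M k * harmonicGapBound M k)
      (2 * ((1 - exp (-M)) / M) + (2 * M + 1) / (2 * √M) / M + (1 - M * exp (-M)) / M) := by
  have hinv := hasSum_poissonWeight_mul_div_succ hM.ne' (f := fun _ => 1)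
    (by simpa only [mul_one] using hasSum_poissonWeight M)
  have hsq := (hasSum_poissonWeight_mul_sub_sq M (M - 1)).add ((hasSum_poissonWeight M).mul_left M)
  have hsqinv := hasSum_poissonWeight_mul_div_succ hM.ne' (hasSum_poissonWeight_mul_sub_sq M M)
  have hsum := ((hinv.mul_left 2).add ((hsq.div_const (2 * √M)).div_const M)).add
    (hsqinv.div_const M)
  have hvalue : 2 * ((1 - exp (-M) * 1) / M) + (M + (M - (M - 1)) ^ 2 + M * 1) / (2 * √M) / M +
      (M + (M - M) ^ 2 - exp (-M) * ((0 : ℕ) - M) ^ 2) / M / M =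
      2 * ((1 - exp (-M)) / M) + (2 * M + 1) / (2 * √M) / M + (1 - M * exp (-M)) / M := by
    field_simp
    push_cast
    ring
  rw [hvalue] at hsum
  exact hsum.congr_fun fun k => by push_cast [harmonicGapBound]; ring

/-- Expectation of the vertex number of the Poisson random convex chain `T_χ` in the
canonical triangle with intensity of total mass `M > 1`. Conditionally on `#χ = k`,
`E f₀(T_χ) = (2/3) H_k + 7/3` (Buchta's formula), so `E f₀(T_χ)` is the Poisson(M)
mixture of these values, and it equals `(2/3) log M + (2γ+7)/3 + O(M^{-1/2})` as
`M → ∞`. -/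
theorem poisson_chain_expectation :
    ∃ C > 0, ∀ M : ℝ, 1 < M →
      |(∑' k : ℕ, (M ^ k * Real.exp (-M) / Nat.factorial k) *
            ((2 / 3) * harmonicR k + 7 / 3))
          - ((2 / 3) * Real.log M + (2 * Real.eulerMascheroniConstant + 7) / 3)|
        ≤ C / Real.sqrt M := by
  refine ⟨3, by norm_num, fun M hM => ?_⟩
  have hM₀ : 0 < M := by linarith
  have hgap := (hasSum_poissonWeight_mul_harmonicGapBound hM₀).mul_left (2 / 3)
  refine (abs_tsum_mul_sub_le (g := fun k => 2 / 3 * harmonicGapBound M k)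
    (hasSum_poissonWeight M) (poissonWeight_nonneg hM₀.le)
    (hgap.congr_fun fun k => by ring) fun k => ?_).trans ?_
  · calc |(2 / 3) * harmonicR k + 7 / 3
            - ((2 / 3) * log M + (2 * eulerMascheroniConstant + 7) / 3)|
          = 2 / 3 * |harmonicR k - (log M + eulerMascheroniConstant)| := by
            rw [← abs_of_pos (by norm_num : (0 : ℝ) < 2 / 3), ← abs_mul]
            ring_nf
        _ ≤ 2 / 3 * harmonicGapBound M k := by
            gcongr
            exact abs_harmonicR_sub_log_add_eulerMascheroniConstant_le hM₀ k
  · obtain ⟨s, hs, rfl⟩ : ∃ s, 1 < s ∧ M = s ^ 2 :=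
      ⟨√M, by rwa [lt_sqrt zero_le_one, one_pow], (sq_sqrt hM₀.le).symm⟩
    have he := exp_pos (-s ^ 2)
    have hs₀ : 0 < s := by linarith
    rw [sqrt_sq hs₀.le]
    field_simp
    nlinarith [mul_pos he hs₀]
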